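/- Let d ≥ 2. There exists δ > 0 with the following property. Let ϱ : S^{d−1} → (0,∞) be a function such that its 0-homogeneous extension F : ℝ^d ∖ {0} → ℝ, F(x) = ϱ(x/‖x‖), is of class C², and suppose that sup_{‖x‖=1} ( |F(x) − 1| + ‖DF(x)‖ + ‖D²F(x)‖ ) ≤ δ. Then the star body K = {sω : ω ∈ S^{d−1}, 0 ≤ s ≤ ϱ(ω)} with radial function ϱ is convex (hence a convex body containing 0 in its interior). -/

import Mathlib

/-!
Homogeneity turns the bound on the sphere into the scale-invariant bound
`|F x - 1| + ‖x‖ ‖DF x‖ + ‖x‖² ‖D²F x‖ ≤ δ` on `ℝ^d ∖ {0}`, where the star body is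
`{x | ‖x‖ ≤ F x}`. Along a segment `γ` avoiding the origin, the second derivative of
`‖γ‖² / F(γ)²` is `2 ‖γ'‖² / F²` up to terms of order `δ ‖γ'‖²`, so this function is convex
and stays `≤ 1` between two points of the star body. A segment through the origin is covered
by star-shapedness.
-/

open Metric Set Topology AffineMap Convex
open scoped RealInnerProductSpace

section Segment

variable {𝕜 E : Type*} [Field 𝕜] [LinearOrder 𝕜] [IsStrictOrderedRing 𝕜]
  [AddCommGroup E] [Module 𝕜 E]

theorem mem_segment_left_or_right {x y z w : E} (hw : w ∈ [x -[𝕜] y]) (hz : z ∈ [x -[𝕜] y]) :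
    z ∈ [x -[𝕜] w] ∨ z ∈ [w -[𝕜] y] := by
  simp only [mem_segment_iff_wbtw] at hw hz ⊢
  obtain ⟨c, hc, rfl⟩ := hw
  obtain ⟨a, ha, rfl⟩ := id hz
  rcases le_total a c with hac | hca
  · left
    simpa only [lineMap_apply] using
      wbtw_smul_vadd_smul_vadd_of_nonneg_of_le x (y -ᵥ x) ha.1 hac
  · right
    refine hz.trans_left_right ?_
    simpa only [lineMap_apply] using
      wbtw_smul_vadd_smul_vadd_of_nonneg_of_le x (y -ᵥ x) hc.1 hca

theorem StarConvex.convex_of_segment_subset {s : Set E} {w : E} (hs : StarConvex 𝕜 w s)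
    (h : ∀ x ∈ s, ∀ y ∈ s, w ∉ [x -[𝕜] y] → [x -[𝕜] y] ⊆ s) : Convex 𝕜 s := by
  refine convex_iff_segment_subset.2 fun x hx y hy => ?_
  by_cases hw : w ∈ [x -[𝕜] y]
  · intro z hz
    rcases mem_segment_left_or_right hw hz with hz | hz
    · exact hs.segment_subset hx (segment_symm 𝕜 x w ▸ hz)
    · exact hs.segment_subset hy hz
  · exact h x hx y hy hw

end Segment

section StarBody

variable {E : Type*} [NormedAddCommGroup E] [NormedSpace ℝ E]

def starBody (F : E → ℝ) : Set E :=
  {y | ∃ ω ∈ sphere (0 : E) 1, ∃ s : ℝ, 0 ≤ s ∧ s ≤ F ω ∧ y = s • ω}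

theorem starConvex_starBody (F : E → ℝ) : StarConvex ℝ 0 (starBody F) := by
  rintro _ ⟨ω, hω, s, hs, hsF, rfl⟩ a b ha hb hab
  refine ⟨ω, hω, b * s, mul_nonneg hb hs, (mul_le_of_le_one_left hs ?_).trans hsF, ?_⟩
  · linarith
  · rw [smul_zero, zero_add, smul_smul]

theorem mem_starBody_iff {F : E → ℝ}
    (hhom : ∀ x : E, x ≠ 0 → ∀ c : ℝ, 0 < c → F (c • x) = F x) {x : E} (hx : x ≠ 0) :
    x ∈ starBody F ↔ ‖x‖ ≤ F x := by
  constructor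
  · rintro ⟨ω, hω, s, hs, hsF, rfl⟩
    rw [mem_sphere_zero_iff_norm] at hω
    have hs : 0 < s := hs.lt_of_ne (by rintro rfl; simp at hx)
    rwa [norm_smul, hω, mul_one, Real.norm_of_nonneg hs.le,
      hhom ω (by simp [← norm_ne_zero_iff, hω]) s hs]
  · intro h
    have hr : 0 < ‖x‖ := norm_pos_iff.2 hx
    refine ⟨‖x‖⁻¹ • x, ?_, ‖x‖, hr.le, ?_, (smul_inv_smul₀ hr.ne' x).symm⟩
    · simp [norm_smul, inv_mul_cancel₀ hr.ne']
    · rwa [hhom x hx _ (inv_pos.2 hr)]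

end StarBody

section Homogeneous

variable {𝕜 E G : Type*} [NontriviallyNormedField 𝕜] [NormedAddCommGroup E] [NormedSpace 𝕜 E]
  [NormedAddCommGroup G] [NormedSpace 𝕜 G]

theorem fderiv_smul_of_forall_ne_zero {φ : E → G} {c a : 𝕜} (hc : c ≠ 0)
    (h : ∀ y ≠ 0, φ (c • y) = a • φ y) {x : E} (hx : x ≠ 0) :
    fderiv 𝕜 φ (c • x) = (c⁻¹ * a) • fderiv 𝕜 φ x := by
  have hloc : (fun y => φ (c • y)) =ᶠ[𝓝 x] a • φ :=
    (eventually_ne_nhds hx).mono fun y hy => h y hy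
  have hscale : c • fderiv 𝕜 φ (c • x) = a • fderiv 𝕜 φ x := by
    rw [← fderiv_comp_smul, hloc.fderiv_eq, fderiv_const_smul_field, Pi.smul_apply]
  rw [mul_smul, ← hscale, inv_smul_smul₀ hc]

end Homogeneous

section ZeroHomogeneous

variable {E : Type*} [NormedAddCommGroup E] [NormedSpace ℝ E] {F : E → ℝ}

theorem fderiv_smul_of_zero_homogeneous
    (hhom : ∀ x : E, x ≠ 0 → ∀ c : ℝ, 0 < c → F (c • x) = F x)
    {c : ℝ} (hc : 0 < c) {x : E} (hx : x ≠ 0) :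
    fderiv ℝ F (c • x) = c⁻¹ • fderiv ℝ F x := by
  simpa using fderiv_smul_of_forall_ne_zero (a := (1 : ℝ)) hc.ne'
    (fun y hy => by rw [hhom y hy c hc, one_smul]) hx

theorem fderiv_fderiv_smul_of_zero_homogeneous
    (hhom : ∀ x : E, x ≠ 0 → ∀ c : ℝ, 0 < c → F (c • x) = F x)
    {c : ℝ} (hc : 0 < c) {x : E} (hx : x ≠ 0) :
    fderiv ℝ (fderiv ℝ F) (c • x) = (c⁻¹ * c⁻¹) • fderiv ℝ (fderiv ℝ F) x :=
  fderiv_smul_of_forall_ne_zero hc.ne'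
    (fun _ hy => fderiv_smul_of_zero_homogeneous hhom hc hy) hx

theorem scaled_bound_of_zero_homogeneous
    (hhom : ∀ x : E, x ≠ 0 → ∀ c : ℝ, 0 < c → F (c • x) = F x) {δ : ℝ}
    (hbound : ∀ u ∈ sphere (0 : E) 1,
      |F u - 1| + ‖fderiv ℝ F u‖ + ‖fderiv ℝ (fderiv ℝ F) u‖ ≤ δ) {x : E} (hx : x ≠ 0) :
    |F x - 1| + ‖x‖ * ‖fderiv ℝ F x‖ + ‖x‖ ^ 2 * ‖fderiv ℝ (fderiv ℝ F) x‖ ≤ δ := by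
  have hr : 0 < ‖x‖⁻¹ := inv_pos.2 (norm_pos_iff.2 hx)
  have hu : ‖x‖⁻¹ • x ∈ sphere (0 : E) 1 := by
    simp [norm_smul, inv_mul_cancel₀ (norm_ne_zero_iff.2 hx)]
  convert hbound _ hu using 3
  · rw [hhom x hx _ hr]
  · rw [fderiv_smul_of_zero_homogeneous hhom hr hx, norm_smul, inv_inv,
      Real.norm_of_nonneg (norm_nonneg x)]
  · rw [fderiv_fderiv_smul_of_zero_homogeneous hhom hr hx, inv_inv, sq]
    -- instance search does not find `NormSMulClass ℝ (E →L[ℝ] E →L[ℝ] ℝ)` by itself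
    have := @norm_smul _ _ _ _ _ (NormedSpace.toNormSMulClass (E := E →L[ℝ] E →L[ℝ] ℝ))
      (‖x‖ * ‖x‖) (fderiv ℝ (fderiv ℝ F) x)
    rw [this, Real.norm_of_nonneg (by positivity)]

theorem bounds_apply_of_scaled_bound {δ : ℝ} {x : E}
    (h : |F x - 1| + ‖x‖ * ‖fderiv ℝ F x‖ + ‖x‖ ^ 2 * ‖fderiv ℝ (fderiv ℝ F) x‖ ≤ δ) (v : E) :
    |F x - 1| ≤ δ ∧ ‖x‖ * |fderiv ℝ F x v| ≤ δ * ‖v‖ ∧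
      ‖x‖ ^ 2 * |fderiv ℝ (fderiv ℝ F) x v v| ≤ δ * ‖v‖ ^ 2 := by
  have h₀ := abs_nonneg (F x - 1)
  have h₁ : 0 ≤ ‖x‖ * ‖fderiv ℝ F x‖ := by positivity
  have h₂ : 0 ≤ ‖x‖ ^ 2 * ‖fderiv ℝ (fderiv ℝ F) x‖ := by positivity
  refine ⟨by linarith, ?_, ?_⟩
  · calc ‖x‖ * |fderiv ℝ F x v| ≤ ‖x‖ * (‖fderiv ℝ F x‖ * ‖v‖) := by
          gcongr; exact (fderiv ℝ F x).le_opNorm v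
      _ = ‖x‖ * ‖fderiv ℝ F x‖ * ‖v‖ := by ring
      _ ≤ δ * ‖v‖ := by gcongr; linarith
  · calc ‖x‖ ^ 2 * |fderiv ℝ (fderiv ℝ F) x v v|
        ≤ ‖x‖ ^ 2 * (‖fderiv ℝ (fderiv ℝ F) x‖ * ‖v‖ * ‖v‖) := by
          gcongr; exact (fderiv ℝ (fderiv ℝ F) x).le_opNorm₂ v v
      _ = ‖x‖ ^ 2 * ‖fderiv ℝ (fderiv ℝ F) x‖ * ‖v‖ ^ 2 := by ring
      _ ≤ δ * ‖v‖ ^ 2 := by gcongr; linarith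

theorem pos_of_scaled_bound {δ : ℝ} (hδ : δ < 1) {x : E}
    (h : |F x - 1| + ‖x‖ * ‖fderiv ℝ F x‖ + ‖x‖ ^ 2 * ‖fderiv ℝ (fderiv ℝ F) x‖ ≤ δ) :
    0 < F x := by
  linarith [abs_sub_le_iff.1 (bounds_apply_of_scaled_bound h 0).1]

end ZeroHomogeneous

section RealFunctions

variable {n n' n'' f f' f'' : ℝ → ℝ}

theorem hasDerivAt_div_sq {t a b : ℝ} (hn : HasDerivAt n a t) (hf : HasDerivAt f b t)
    (hft : f t ≠ 0) :
    HasDerivAt (fun s => n s / f s ^ 2) ((a * f t - 2 * n t * b) / f t ^ 3) t := by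
  refine (hn.div (hf.fun_pow 2) (pow_ne_zero 2 hft)).congr_deriv ?_
  field_simp
  ring

theorem convexOn_div_sq {D : Set ℝ} (hD : Convex ℝ D)
    (hn : ∀ t ∈ D, HasDerivAt n (n' t) t) (hn' : ∀ t ∈ D, HasDerivAt n' (n'' t) t)
    (hf : ∀ t ∈ D, HasDerivAt f (f' t) t) (hf' : ∀ t ∈ D, HasDerivAt f' (f'' t) t)
    (hf0 : ∀ t ∈ D, f t ≠ 0)
    (hD2 : ∀ t ∈ D, 0 ≤ n'' t * f t ^ 2 - 4 * n' t * f' t * f t - 2 * n t * f t * f'' t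
      + 6 * n t * f' t ^ 2) :
    ConvexOn ℝ D (fun s => n s / f s ^ 2) := by
  have hD1 : ∀ t ∈ D, HasDerivAt (fun s => n s / f s ^ 2)
      ((n' t * f t - 2 * n t * f' t) / f t ^ 3) t := fun t ht =>
    hasDerivAt_div_sq (hn t ht) (hf t ht) (hf0 t ht)
  refine convexOn_of_hasDerivWithinAt2_nonneg (f'' := fun t => (n'' t * f t ^ 2
      - 4 * n' t * f' t * f t - 2 * n t * f t * f'' t + 6 * n t * f' t ^ 2) / f t ^ 4) hD
    (fun t ht => (hD1 t ht).continuousAt.continuousWithinAt)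
    (fun t ht => (hD1 t (interior_subset ht)).hasDerivWithinAt) (fun t ht => ?_)
    (fun t ht => div_nonneg (hD2 t (interior_subset ht)) (by positivity))
  replace ht := interior_subset ht
  refine HasDerivAt.hasDerivWithinAt ?_
  refine ((((hn' t ht).mul (hf t ht)).sub (((hn t ht).const_mul 2).mul (hf' t ht))).div
    ((hf t ht).fun_pow 3) (pow_ne_zero 3 (hf0 t ht))).congr_deriv ?_
  have := hf0 t ht
  simp only [Pi.sub_apply, Pi.mul_apply]
  field_simp
  ring

-- The numerator of the second derivative in `convexOn_div_sq`,
-- for `n = r ^ 2`, `n' = 2 p`, `n'' = 2 w ^ 2`.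
theorem second_variation_nonneg {δ r w p a b c : ℝ} (hδ : δ ≤ 1 / 10) (hw : 0 ≤ w)
    (hp : |p| ≤ r * w) (ha : |a - 1| ≤ δ) (hb : r * |b| ≤ δ * w) (hc : r ^ 2 * |c| ≤ δ * w ^ 2) :
    0 ≤ 2 * w ^ 2 * a ^ 2 - 4 * (2 * p) * b * a - 2 * r ^ 2 * a * c + 6 * r ^ 2 * b ^ 2 := by
  have hδ0 : 0 ≤ δ := (abs_nonneg _).trans ha
  obtain ⟨-, ha₁⟩ := abs_sub_le_iff.1 ha
  have ha0 : 0 ≤ a := by linarith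
  have hpb : p * b ≤ δ * w ^ 2 := calc
    p * b ≤ |p| * |b| := (le_abs_self _).trans (abs_mul p b).le
    _ ≤ r * w * |b| := by gcongr
    _ = w * (r * |b|) := by ring
    _ ≤ w * (δ * w) := by gcongr
    _ = δ * w ^ 2 := by ring
  have hrc : r ^ 2 * c ≤ δ * w ^ 2 :=
    (mul_le_mul_of_nonneg_left (le_abs_self c) (sq_nonneg r)).trans hc
  have hmain : 0 ≤ 2 * w ^ 2 * a * (a - 5 * δ) := by
    have : 0 ≤ a - 5 * δ := by linarith
    positivity
  nlinarith [mul_le_mul_of_nonneg_right hpb ha0, mul_le_mul_of_nonneg_right hrc ha0,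
    mul_nonneg (sq_nonneg r) (sq_nonneg b)]

end RealFunctions

section AlongSegments

variable {E : Type*} [NormedAddCommGroup E]

theorem hasDerivAt_add_smul [NormedSpace ℝ E] (x v : E) (t : ℝ) :
    HasDerivAt (fun s : ℝ => x + s • v) v t :=
  (((hasDerivAt_id t).smul_const v).const_add x).congr_deriv (one_smul ℝ v)

theorem hasDerivAt_comp_add_smul [NormedSpace ℝ E] {G : Type*} [NormedAddCommGroup G]
    [NormedSpace ℝ G] {φ : E → G} {x v : E} {t : ℝ} (h : DifferentiableAt ℝ φ (x + t • v)) :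
    HasDerivAt (fun s : ℝ => φ (x + s • v)) (fderiv ℝ φ (x + t • v) v) t :=
  h.hasFDerivAt.comp_hasDerivAt t (hasDerivAt_add_smul x v t)

variable [InnerProductSpace ℝ E] {F : E → ℝ} {δ : ℝ}

theorem convexOn_norm_sq_div_sq_comp_add_smul (hδ : δ ≤ 1 / 10) (hF : ContDiffOn ℝ 2 F {0}ᶜ)
    (hbound : ∀ x ≠ 0,
      |F x - 1| + ‖x‖ * ‖fderiv ℝ F x‖ + ‖x‖ ^ 2 * ‖fderiv ℝ (fderiv ℝ F) x‖ ≤ δ)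
    {x v : E} {D : Set ℝ} (hD : Convex ℝ D) (hD0 : ∀ t ∈ D, x + t • v ≠ 0) :
    ConvexOn ℝ D (fun t => ‖x + t • v‖ ^ 2 / F (x + t • v) ^ 2) := by
  have hdiff : ∀ t ∈ D, DifferentiableAt ℝ F (x + t • v) ∧
      DifferentiableAt ℝ (fderiv ℝ F) (x + t • v) := fun t ht =>
    have hF' := hF.contDiffAt (isOpen_compl_singleton.mem_nhds (hD0 t ht))
    ⟨hF'.differentiableAt two_ne_zero, (hF'.fderiv_right le_rfl).differentiableAt one_ne_zero⟩
  refine convexOn_div_sq hD (n' := fun t => 2 * ⟪x + t • v, v⟫)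
    (n'' := fun _ => 2 * ‖v‖ ^ 2) (f' := fun t => fderiv ℝ F (x + t • v) v)
    (f'' := fun t => fderiv ℝ (fderiv ℝ F) (x + t • v) v v)
    (fun t _ => (hasDerivAt_add_smul x v t).norm_sq) (fun t _ => ?_)
    (fun t ht => hasDerivAt_comp_add_smul (hdiff t ht).1) (fun t ht => ?_) (fun t ht => ?_)
    (fun t ht => ?_)
  · simpa [real_inner_self_eq_norm_sq] using
      ((hasDerivAt_add_smul x v t).inner ℝ (hasDerivAt_const t v)).const_mul 2
  · simpa using (hasDerivAt_comp_add_smul (hdiff t ht).2).clm_apply (hasDerivAt_const t v)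
  · exact (pos_of_scaled_bound (by linarith) (hbound _ (hD0 t ht))).ne'
  · obtain ⟨ha, hb, hc⟩ := bounds_apply_of_scaled_bound (hbound _ (hD0 t ht)) v
    exact second_variation_nonneg hδ (norm_nonneg v) (abs_real_inner_le_norm _ _) ha hb hc

theorem norm_le_of_mem_segment (hδ : δ ≤ 1 / 10) (hF : ContDiffOn ℝ 2 F {0}ᶜ)
    (hbound : ∀ x ≠ 0,
      |F x - 1| + ‖x‖ * ‖fderiv ℝ F x‖ + ‖x‖ ^ 2 * ‖fderiv ℝ (fderiv ℝ F) x‖ ≤ δ)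
    {x y z : E} (h0 : (0 : E) ∉ [x -[ℝ] y]) (hx : ‖x‖ ≤ F x) (hy : ‖y‖ ≤ F y)
    (hz : z ∈ [x -[ℝ] y]) : ‖z‖ ≤ F z := by
  have hsq : ∀ w ≠ 0, ‖w‖ ^ 2 / F w ^ 2 ≤ 1 ↔ ‖w‖ ≤ F w := fun w hw => by
    have := pos_of_scaled_bound (by linarith) (hbound w hw)
    rw [div_le_one (by positivity), pow_le_pow_iff_left₀ (norm_nonneg w) this.le two_ne_zero]
  have hline : ∀ t ∈ Icc (0 : ℝ) 1, x + t • (y - x) ≠ 0 := fun t ht h =>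
    h0 (segment_eq_image' ℝ x y ▸ ⟨t, ht, h⟩)
  have hconv := convexOn_norm_sq_div_sq_comp_add_smul hδ hF hbound (convex_Icc 0 1) hline
  obtain ⟨t, ht, rfl⟩ := segment_eq_image' ℝ x y ▸ hz
  have h0mem := left_mem_Icc.2 (zero_le_one' ℝ)
  have h1mem := right_mem_Icc.2 (zero_le_one' ℝ)
  have hle := hconv.le_on_segment h0mem h1mem
    (show t ∈ [(0 : ℝ) -[ℝ] 1] by rwa [segment_eq_Icc zero_le_one])
  refine (hsq _ (hline t ht)).1 (hle.trans (max_le ?_ ?_))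
  · exact (hsq _ (hline 0 h0mem)).2 (by simpa using hx)
  · exact (hsq _ (hline 1 h1mem)).2 (by simpa using hy)

end AlongSegments

theorem starBody_convex_of_C2_close_to_ball_general (d : ℕ) :
    ∃ δ > (0 : ℝ),
      ∀ F : EuclideanSpace ℝ (Fin d) → ℝ,
        (∀ x : EuclideanSpace ℝ (Fin d), x ≠ 0 → ∀ c : ℝ, 0 < c → F (c • x) = F x) →
        ContDiffOn ℝ 2 F {(0 : EuclideanSpace ℝ (Fin d))}ᶜ →
        (∀ x ∈ sphere (0 : EuclideanSpace ℝ (Fin d)) 1, 0 < F x) →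
        (∀ x ∈ sphere (0 : EuclideanSpace ℝ (Fin d)) 1,
          |F x - 1| + ‖fderiv ℝ F x‖ + ‖fderiv ℝ (fderiv ℝ F) x‖ ≤ δ) →
        Convex ℝ {y : EuclideanSpace ℝ (Fin d) |
          ∃ ω ∈ sphere (0 : EuclideanSpace ℝ (Fin d)) 1,
            ∃ s : ℝ, 0 ≤ s ∧ s ≤ F ω ∧ y = s • ω} := by
  refine ⟨1 / 10, by norm_num, fun F hhom hF _ hbound => ?_⟩
  have hscaled := fun x (hx : x ≠ 0) => scaled_bound_of_zero_homogeneous hhom hbound hx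
  refine (starConvex_starBody F).convex_of_segment_subset fun x hx y hy h0 z hz => ?_
  have hne : ∀ w ∈ [x -[ℝ] y], w ≠ 0 := fun w hw h => h0 (h ▸ hw)
  rw [mem_starBody_iff hhom (hne x (left_mem_segment ℝ x y))] at hx
  rw [mem_starBody_iff hhom (hne y (right_mem_segment ℝ x y))] at hy
  rw [mem_starBody_iff hhom (hne z hz)]
  exact norm_le_of_mem_segment le_rfl hF hscaled h0 hx hy hz

/-- **Star bodies with radial function `C²`-close to `1` are convex.**
For `d ≥ 2` there is `δ > 0` such that: if `ϱ : S^{d−1} → (0,∞)` has `0`-homogeneous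
extension `F` (i.e. `F (c • x) = F x` for `c > 0`, `x ≠ 0`) of class `C²` on
`ℝ^d ∖ {0}` with `sup_{‖x‖=1} (|F x − 1| + ‖DF x‖ + ‖D²F x‖) ≤ δ`, then the star body
`K = {s • ω : ω ∈ S^{d−1}, 0 ≤ s ≤ F ω}` is convex. -/
theorem starBody_convex_of_C2_close_to_ball (d : ℕ) (hd : 2 ≤ d) :
    ∃ δ > (0 : ℝ),
      ∀ F : EuclideanSpace ℝ (Fin d) → ℝ,
        (∀ x : EuclideanSpace ℝ (Fin d), x ≠ 0 → ∀ c : ℝ, 0 < c → F (c • x) = F x) →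
        ContDiffOn ℝ 2 F {(0 : EuclideanSpace ℝ (Fin d))}ᶜ →
        (∀ x ∈ sphere (0 : EuclideanSpace ℝ (Fin d)) 1, 0 < F x) →
        (∀ x ∈ sphere (0 : EuclideanSpace ℝ (Fin d)) 1,
          |F x - 1| + ‖fderiv ℝ F x‖ + ‖fderiv ℝ (fderiv ℝ F) x‖ ≤ δ) →
        Convex ℝ {y : EuclideanSpace ℝ (Fin d) |
          ∃ ω ∈ sphere (0 : EuclideanSpace ℝ (Fin d)) 1,
            ∃ s : ℝ, 0 ≤ s ∧ s ≤ F ω ∧ y = s • ω} :=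
  starBody_convex_of_C2_close_to_ball_general d
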